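/- Let F : Cvx_n → (-∞,∞] be linear (F(αφ+βψ) = αF(φ)+βF(ψ) for α,β>0) and increasing on proper lsc convex functions on ℝⁿ, and assume there exists φ_0 with ∫ e^{-φ_0*} > 0 and F(φ_0) < ∞. Then F(φ) < ∞ for every convex function φ of linear growth; in particular F(|x|) < ∞ and F of every affine function is finite. -/

import Mathlib

/-!
Since `∫ e^{-φ₀*} > 0`, some sublevel set `{φ₀* ≤ M}` has positive measure; being convex, it
contains a closed ball `B(p, r)`, and Fenchel–Young then gives `⟪x, p⟫ + r‖x‖ - M ≤ φ₀ x`.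
By monotonicity `F` is finite at this minorant. Splitting it as `(r‖x‖ + t) + (⟪x, p⟫ - M - t)`,
linearity together with `F > -∞` makes `F` finite at `r‖x‖ + t`; a suitable `t` and a rescaling
give finiteness at `A‖x‖ + B`, which dominates `φ`.
-/

open Filter Topology MeasureTheory

/-- `φ : ℝⁿ → (-∞,∞]` is a proper lower semi-continuous convex function. -/
def IsLscConvexFn {n : ℕ} (φ : EuclideanSpace ℝ (Fin n) → EReal) : Prop :=
  LowerSemicontinuous φ ∧ (∀ x, φ x ≠ ⊥) ∧ (∃ x, φ x ≠ ⊤) ∧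
    ∀ x y : EuclideanSpace ℝ (Fin n), ∀ a b : ℝ, 0 < a → 0 < b → a + b = 1 →
      φ (a • x + b • y) ≤ (a : EReal) * φ x + (b : EReal) * φ y

/-- The Legendre transform. -/
noncomputable def legendre {n : ℕ} (φ : EuclideanSpace ℝ (Fin n) → EReal)
    (y : EuclideanSpace ℝ (Fin n)) : EReal :=
  ⨆ x : EuclideanSpace ℝ (Fin n), ((inner ℝ x y : ℝ) : EReal) - φ x

/-- The log-concave function `e^{-φ*}` as an `ℝ≥0∞`-valued function. -/
noncomputable def expNegLegendre {n : ℕ} (φ : EuclideanSpace ℝ (Fin n) → EReal)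
    (x : EuclideanSpace ℝ (Fin n)) : ENNReal :=
  if legendre φ x = ⊤ then 0 else ENNReal.ofReal (Real.exp (-(legendre φ x).toReal))

open Set

namespace EReal

theorem coe_mul_add_coe_mul_ne_top_iff {α β : ℝ} {a b : EReal} (hα : 0 < α) (hβ : 0 < β)
    (ha : a ≠ ⊥) (hb : b ≠ ⊥) :
    (α : EReal) * a + (β : EReal) * b ≠ ⊤ ↔ a ≠ ⊤ ∧ b ≠ ⊤ := by
  rw [add_ne_top_iff_ne_top₂ (by simp [mul_ne_bot, ha, hα.le]) (by simp [mul_ne_bot, hb, hβ.le])]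
  simp [mul_ne_top, hα.le, hβ.le, not_le.2 hα, not_le.2 hβ]

end EReal

theorem isLscConvexFn_of_continuous_of_convexOn {n : ℕ} {f : EuclideanSpace ℝ (Fin n) → ℝ}
    (hcont : Continuous f) (hconv : ConvexOn ℝ univ f) :
    IsLscConvexFn fun x => (f x : EReal) := by
  refine ⟨(continuous_coe_real_ereal.comp hcont).lowerSemicontinuous, fun _ => EReal.coe_ne_bot _,
    ⟨0, EReal.coe_ne_top _⟩, fun x y a b ha hb hab => ?_⟩
  have h := hconv.2 (mem_univ x) (mem_univ y) ha.le hb.le hab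
  simp only [smul_eq_mul] at h
  dsimp only
  exact_mod_cast h

theorem Convex.interior_nonempty_of_addHaar_ne_zero {E : Type*} [NormedAddCommGroup E]
    [NormedSpace ℝ E] [MeasurableSpace E] [BorelSpace E] [FiniteDimensional ℝ E]
    (μ : Measure E) [μ.IsAddHaarMeasure] {s : Set E} (hs : Convex ℝ s) (hμ : μ s ≠ 0) :
    (interior s).Nonempty := by
  rw [nonempty_iff_ne_empty]
  intro h
  refine hμ (measure_mono_null ?_ (hs.addHaar_frontier μ))
  simpa [h] using (subset_closure (s := s)).trans (closure_eq_interior_union_frontier s).subset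

theorem exists_mem_closedBall_inner_eq_add {E : Type*} [NormedAddCommGroup E]
    [InnerProductSpace ℝ E] (x p : E) {r : ℝ} (hr : 0 ≤ r) :
    ∃ y ∈ Metric.closedBall p r, inner ℝ x y = inner ℝ x p + r * ‖x‖ := by
  refine ⟨p + (r / ‖x‖) • x, ?_, ?_⟩
  · rw [Metric.mem_closedBall, dist_eq_norm, add_sub_cancel_left, norm_smul, norm_div, norm_norm,
      Real.norm_of_nonneg hr]
    rcases eq_or_ne ‖x‖ 0 with h | h <;> simp [h, hr]
  · rw [inner_add_right, real_inner_smul_right, real_inner_self_eq_norm_sq]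
    rcases eq_or_ne ‖x‖ 0 with h | h
    · simp [h]
    · field_simp

theorem inner_sub_le_of_legendre_le {n : ℕ} {φ : EuclideanSpace ℝ (Fin n) → EReal}
    {x y : EuclideanSpace ℝ (Fin n)} {M : ℝ} (h : legendre φ y ≤ M) :
    ((inner ℝ x y - M : ℝ) : EReal) ≤ φ x := by
  have hx := (le_iSup (fun z => ((inner ℝ z y : ℝ) : EReal) - φ z) x).trans h
  induction h : φ x with
  | bot => simp [h] at hx
  | top => exact le_top
  | coe t =>
    rw [h, ← EReal.coe_sub, EReal.coe_le_coe_iff] at hx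
    exact EReal.coe_le_coe_iff.2 (by linarith)

theorem convex_setOf_legendre_le {n : ℕ} (φ : EuclideanSpace ℝ (Fin n) → EReal) (M : ℝ) :
    Convex ℝ {y | legendre φ y ≤ M} := by
  have hinter : {y | legendre φ y ≤ M} = ⋂ x, {y | ((inner ℝ x y : ℝ) : EReal) - φ x ≤ M} := by
    ext y
    simp [legendre, iSup_le_iff]
  rw [hinter]
  refine convex_iInter fun x => ?_
  induction h : φ x with
  | bot => simpa using convex_empty
  | top => simpa using convex_univ
  | coe t =>
    simp_rw [← EReal.coe_sub, EReal.coe_le_coe_iff, sub_le_iff_le_add]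
    exact convex_halfSpace_le (innerₛₗ ℝ x).isLinear _

theorem exists_volume_setOf_legendre_le_ne_zero {n : ℕ} {φ : EuclideanSpace ℝ (Fin n) → EReal}
    (hint : 0 < ∫⁻ x, expNegLegendre φ x) :
    ∃ M : ℝ, volume {y | legendre φ y ≤ M} ≠ 0 := by
  by_contra! h
  have hfinite : volume {y | legendre φ y ≠ ⊤} = 0 := by
    refine measure_mono_null (fun y hy => ?_) (measure_iUnion_null fun M : ℕ => h M)
    exact mem_iUnion.2 ⟨⌈(legendre φ y).toReal⌉₊,
      (EReal.le_coe_toReal hy).trans (EReal.coe_le_coe_iff.2 (Nat.le_ceil _))⟩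
  have hzero : expNegLegendre φ =ᵐ[volume] 0 := by
    refine ae_iff.2 (measure_mono_null (fun y hy => ?_) hfinite)
    intro htop
    exact hy (by simp [expNegLegendre, htop])
  simp [lintegral_congr_ae hzero] at hint

theorem exists_closedBall_subset_setOf_legendre_le {n : ℕ}
    {φ : EuclideanSpace ℝ (Fin n) → EReal} (hint : 0 < ∫⁻ x, expNegLegendre φ x) :
    ∃ (p : EuclideanSpace ℝ (Fin n)) (r M : ℝ), 0 < r ∧
      Metric.closedBall p r ⊆ {y | legendre φ y ≤ M} := by
  obtain ⟨M, hM⟩ := exists_volume_setOf_legendre_le_ne_zero hint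
  obtain ⟨p, hp⟩ := (convex_setOf_legendre_le φ M).interior_nonempty_of_addHaar_ne_zero volume hM
  obtain ⟨r, hr, hball⟩ := Metric.nhds_basis_closedBall.mem_iff.1 (mem_interior_iff_mem_nhds.1 hp)
  exact ⟨p, r, M, hr, hball⟩

noncomputable def affineAddNorm {E : Type*} [NormedAddCommGroup E] [InnerProductSpace ℝ E]
    (p : E) (c d : ℝ) (x : E) : EReal :=
  ((inner ℝ x p + c * ‖x‖ + d : ℝ) : EReal)

theorem affineAddNorm_combination {E : Type*} [NormedAddCommGroup E] [InnerProductSpace ℝ E]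
    {p q s : E} {c₁ c₂ c d₁ d₂ d α β : ℝ} (hs : α • p + β • q = s)
    (hc : α * c₁ + β * c₂ = c) (hd : α * d₁ + β * d₂ = d) :
    (fun x => (α : EReal) * affineAddNorm p c₁ d₁ x + (β : EReal) * affineAddNorm q c₂ d₂ x)
      = affineAddNorm s c d := by
  funext x
  simp only [affineAddNorm, ← EReal.coe_mul, ← EReal.coe_add, EReal.coe_eq_coe_iff]
  rw [← hs, ← hc, ← hd, inner_add_right, real_inner_smul_right, real_inner_smul_right]
  ring

theorem isLscConvexFn_affineAddNorm {n : ℕ} (p : EuclideanSpace ℝ (Fin n)) {c : ℝ} (d : ℝ)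
    (hc : 0 ≤ c) : IsLscConvexFn (affineAddNorm p c d) := by
  refine isLscConvexFn_of_continuous_of_convexOn (by fun_prop) ?_
  have hlin : ConvexOn ℝ univ fun x => inner ℝ x p :=
    ((innerₛₗ ℝ p).convexOn convex_univ).congr fun x _ => real_inner_comm x p
  exact (hlin.add ((convexOn_norm convex_univ).smul hc)).add (convexOn_const d convex_univ)

theorem affineAddNorm_le_of_legendre_le {n : ℕ} {φ : EuclideanSpace ℝ (Fin n) → EReal}
    {p : EuclideanSpace ℝ (Fin n)} {r M : ℝ} (hr : 0 ≤ r)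
    (hball : Metric.closedBall p r ⊆ {y | legendre φ y ≤ M}) (x : EuclideanSpace ℝ (Fin n)) :
    affineAddNorm p r (-M) x ≤ φ x := by
  obtain ⟨y, hy, hxy⟩ := exists_mem_closedBall_inner_eq_add x p hr
  have h := inner_sub_le_of_legendre_le (x := x) (hball hy)
  rwa [hxy, sub_eq_add_neg] at h

theorem map_affineAddNorm_ne_top_iff {n : ℕ}
    {F : (EuclideanSpace ℝ (Fin n) → EReal) → EReal} (hne : ∀ φ, F φ ≠ ⊥)
    (hlin : ∀ φ ψ : EuclideanSpace ℝ (Fin n) → EReal, ∀ α β : ℝ,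
      IsLscConvexFn φ → IsLscConvexFn ψ → 0 < α → 0 < β →
      IsLscConvexFn (fun x => (α : EReal) * φ x + (β : EReal) * ψ x) →
      F (fun x => (α : EReal) * φ x + (β : EReal) * ψ x)
        = (α : EReal) * F φ + (β : EReal) * F ψ)
    {p q s : EuclideanSpace ℝ (Fin n)} {c₁ c₂ c d₁ d₂ d α β : ℝ} (hc₁ : 0 ≤ c₁) (hc₂ : 0 ≤ c₂)
    (hα : 0 < α) (hβ : 0 < β) (hs : α • p + β • q = s) (hc : α * c₁ + β * c₂ = c)
    (hd : α * d₁ + β * d₂ = d) :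
    F (affineAddNorm s c d) ≠ ⊤ ↔
      F (affineAddNorm p c₁ d₁) ≠ ⊤ ∧ F (affineAddNorm q c₂ d₂) ≠ ⊤ := by
  have hcomb := affineAddNorm_combination hs hc hd
  have hc_nonneg : 0 ≤ c := hc ▸ by positivity
  rw [← hcomb, hlin _ _ α β (isLscConvexFn_affineAddNorm p d₁ hc₁)
    (isLscConvexFn_affineAddNorm q d₂ hc₂) hα hβ
    (hcomb ▸ isLscConvexFn_affineAddNorm s d hc_nonneg)]
  exact EReal.coe_mul_add_coe_mul_ne_top_iff hα hβ (hne _) (hne _)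

/-- Lemma 5.1: a linear increasing functional `F : Cvx_n → (-∞,∞]` which is finite
at some `φ₀` with `∫ e^{-φ₀*} > 0` is finite on every convex function of linear
growth. -/
theorem finite_on_linear_growth {n : ℕ}
    (F : (EuclideanSpace ℝ (Fin n) → EReal) → EReal)
    (hne : ∀ φ, F φ ≠ ⊥)
    (hlin : ∀ φ ψ : EuclideanSpace ℝ (Fin n) → EReal, ∀ α β : ℝ,
      IsLscConvexFn φ → IsLscConvexFn ψ → 0 < α → 0 < β →
      IsLscConvexFn (fun x => (α : EReal) * φ x + (β : EReal) * ψ x) →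
      F (fun x => (α : EReal) * φ x + (β : EReal) * ψ x)
        = (α : EReal) * F φ + (β : EReal) * F ψ)
    (hmono : ∀ φ ψ : EuclideanSpace ℝ (Fin n) → EReal,
      IsLscConvexFn φ → IsLscConvexFn ψ → (∀ x, φ x ≤ ψ x) → F φ ≤ F ψ)
    (φ₀ : EuclideanSpace ℝ (Fin n) → EReal) (hφ₀ : IsLscConvexFn φ₀)
    (hint : 0 < ∫⁻ x, expNegLegendre φ₀ x) (hF₀ : F φ₀ ≠ ⊤) :
    ∀ φ : EuclideanSpace ℝ (Fin n) → EReal, IsLscConvexFn φ →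
      (∃ A B : ℝ, 0 < A ∧ 0 < B ∧ ∀ x, φ x ≤ ((A * ‖x‖ + B : ℝ) : EReal)) →
      F φ ≠ ⊤ := by
  obtain ⟨p, r, M, hr, hball⟩ := exists_closedBall_subset_setOf_legendre_le hint
  have hF_minorant : F (affineAddNorm p r (-M)) ≠ ⊤ :=
    ne_top_of_le_ne_top hF₀ (hmono _ _ (isLscConvexFn_affineAddNorm p _ hr.le) hφ₀
      (affineAddNorm_le_of_legendre_le hr.le hball))
  rintro φ hφ ⟨A, B, hA, -, hφ_le⟩
  set t := B * r / A with ht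
  -- `⟪x, p⟫ + r‖x‖ - M = (r‖x‖ + t) + (⟪x, p⟫ - M - t)`
  have hu : F (affineAddNorm 0 r t) ≠ ⊤ :=
    ((map_affineAddNorm_ne_top_iff (p := 0) (q := p) (d₁ := t) (d₂ := -M - t) hne hlin hr.le
      le_rfl one_pos one_pos (by simp) (by ring) (by ring)).1 hF_minorant).1
  -- `A‖x‖ + B = (A / 2r)(r‖x‖ + t) + (A / 2r)(r‖x‖ + t)`
  have hv : F (affineAddNorm 0 A B) ≠ ⊤ := by
    have hα : 0 < A / (2 * r) := by positivity
    exact (map_affineAddNorm_ne_top_iff (s := 0) (c := A) (d := B) hne hlin hr.le hr.le hα hα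
      (by simp) (by field_simp; ring) (by rw [ht]; field_simp; ring)).2 ⟨hu, hu⟩
  refine ne_top_of_le_ne_top hv (hmono _ _ hφ (isLscConvexFn_affineAddNorm 0 B hA.le) fun x => ?_)
  simpa [affineAddNorm] using hφ_le x
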